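/- arXiv:2009.00991 — 2 statements merged into one kernel-verified Lean document; each statement's English description precedes it below -/
import Mathlib

section
/- Assume a is positive semidefinite on V (a(w,w) ≥ 0 for all w ∈ V) and the CFL condition holds with constant ρ ∈ [0,1), i.e. τ² a(w,w) ≤ 4ρ² ‖π w‖² for all w ∈ V. Then for any sequence (v^n) with v^n, v^{n+1} ∈ V, the discrete energy satisfies the lower bound E^{n+1/2}(v) ≥ ((1−ρ²)/2) ‖π((v^{n+1} − v^n)/τ)‖² + (1/2) a((v^{n+1} + v^n)/2, (v^{n+1} + v^n)/2) ≥ 0. -/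
open RealInnerProductSpace

/-- The discrete energy `E^{n+1/2}(v)` of the leapfrog scheme. -/
noncomputable def discE {H : Type*} [NormedAddCommGroup H] [InnerProductSpace ℝ H]
    (W : Submodule ℝ H) [W.HasOrthogonalProjection]
    (a : H →ₗ[ℝ] H →ₗ[ℝ] ℝ) (τ : ℝ) (v : ℕ → H) (n : ℕ) : ℝ :=
  (1 / 2) * ‖(W.orthogonalProjectionOnto (τ⁻¹ • (v (n + 1) - v n)) : H)‖ ^ 2
    - (τ ^ 2 / 8) * a (τ⁻¹ • (v (n + 1) - v n)) (τ⁻¹ • (v (n + 1) - v n))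
    + (1 / 2) * a ((2 : ℝ)⁻¹ • (v (n + 1) + v n)) ((2 : ℝ)⁻¹ • (v (n + 1) + v n))

theorem energy_lower_bound_general
    {H : Type*} [NormedAddCommGroup H] [InnerProductSpace ℝ H]
    (W V : Submodule ℝ H) [W.HasOrthogonalProjection]
    (a : H →ₗ[ℝ] H →ₗ[ℝ] ℝ)
    (τ : ℝ)
    (ρ : ℝ) (hρ0 : 0 ≤ ρ) (hρ1 : ρ < 1)
    (hpos : ∀ w ∈ V, 0 ≤ a w w)
    (hCFL : ∀ w ∈ V, τ ^ 2 * a w w ≤ 4 * ρ ^ 2 * ‖(W.orthogonalProjectionOnto w : H)‖ ^ 2)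
    (v : ℕ → H) (n : ℕ) (hvn : v n ∈ V) (hvn1 : v (n + 1) ∈ V) :
    ((1 - ρ ^ 2) / 2) * ‖(W.orthogonalProjectionOnto (τ⁻¹ • (v (n + 1) - v n)) : H)‖ ^ 2
        + (1 / 2) * a ((2 : ℝ)⁻¹ • (v (n + 1) + v n)) ((2 : ℝ)⁻¹ • (v (n + 1) + v n))
      ≤ discE W a τ v n
    ∧ 0 ≤ ((1 - ρ ^ 2) / 2) * ‖(W.orthogonalProjectionOnto (τ⁻¹ • (v (n + 1) - v n)) : H)‖ ^ 2
        + (1 / 2) * a ((2 : ℝ)⁻¹ • (v (n + 1) + v n)) ((2 : ℝ)⁻¹ • (v (n + 1) + v n)) := by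
  have hdiff : τ⁻¹ • (v (n + 1) - v n) ∈ V := V.smul_mem _ (V.sub_mem hvn1 hvn)
  have havg : (2 : ℝ)⁻¹ • (v (n + 1) + v n) ∈ V := V.smul_mem _ (V.add_mem hvn1 hvn)
  have hρ : 0 ≤ 1 - ρ ^ 2 := sub_nonneg.mpr (pow_le_one₀ hρ0 hρ1.le)
  refine ⟨?_, ?_⟩
  · -- CFL absorbs the negative `τ²/8 · a` term into a `ρ²/2` share of the kinetic term
    have hcfl := hCFL _ hdiff
    unfold discE
    linarith
  · exact add_nonneg (mul_nonneg (div_nonneg hρ zero_le_two) (sq_nonneg _))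
      (mul_nonneg one_half_pos.le (hpos _ havg))

/-- Under positive semidefiniteness of `a` on `V` and the CFL condition
`τ² a(w,w) ≤ 4ρ² ‖π w‖²` with `ρ ∈ [0,1)`, the discrete energy satisfies the lower bound
`E^{n+1/2}(v) ≥ ((1−ρ²)/2)‖π((v^{n+1}−v^n)/τ)‖² + (1/2) a((v^{n+1}+v^n)/2,(v^{n+1}+v^n)/2) ≥ 0`. -/
theorem energy_lower_bound
    {H : Type*} [NormedAddCommGroup H] [InnerProductSpace ℝ H]
    (W V : Submodule ℝ H) [W.HasOrthogonalProjection]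
    (a : H →ₗ[ℝ] H →ₗ[ℝ] ℝ) (hsymm : ∀ u w : H, a u w = a w u)
    (τ : ℝ) (hτ : 0 < τ)
    (ρ : ℝ) (hρ0 : 0 ≤ ρ) (hρ1 : ρ < 1)
    (hpos : ∀ w ∈ V, 0 ≤ a w w)
    (hCFL : ∀ w ∈ V, τ ^ 2 * a w w ≤ 4 * ρ ^ 2 * ‖(W.orthogonalProjectionOnto w : H)‖ ^ 2)
    (v : ℕ → H) (n : ℕ) (hvn : v n ∈ V) (hvn1 : v (n + 1) ∈ V) :
    ((1 - ρ ^ 2) / 2) * ‖(W.orthogonalProjectionOnto (τ⁻¹ • (v (n + 1) - v n)) : H)‖ ^ 2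
        + (1 / 2) * a ((2 : ℝ)⁻¹ • (v (n + 1) + v n)) ((2 : ℝ)⁻¹ • (v (n + 1) + v n))
      ≤ discE W a τ v n
    ∧ 0 ≤ ((1 - ρ ^ 2) / 2) * ‖(W.orthogonalProjectionOnto (τ⁻¹ • (v (n + 1) - v n)) : H)‖ ^ 2
        + (1 / 2) * a ((2 : ℝ)⁻¹ • (v (n + 1) + v n)) ((2 : ℝ)⁻¹ • (v (n + 1) + v n)) :=
  energy_lower_bound_general W V a τ ρ hρ0 hρ1 hpos hCFL v n hvn hvn1
end

section
/- Assume a is positive semidefinite on V and the CFL condition holds with constant ρ ∈ [0,1) (τ² a(w,w) ≤ 4ρ² ‖π w‖² for all w ∈ V). Suppose (v^n)_{n≥0} is a sequence in V satisfying, for every n ≥ 1 and every w ∈ V, b((v^{n+1} − 2v^n + v^{n−1})/τ², w) + a(v^n, w) = b(f^n, w), where (f^n)_{n≥1} is a sequence in 𝓗. Then there exists a constant C > 0, depending only on ρ, such that for all n ≥ 1: ‖π((v^{n+1} − v^n)/τ)‖² + a((v^{n+1} + v^n)/2, (v^{n+1} + v^n)/2) ≤ C ( E^{1/2}(v) + τ²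 (Σ_{k=1}^{n} ‖π f^k‖)² ). -/
/-!
Testing the scheme at step `n` with `(v^{n+1} - v^{n-1}) / 2` gives the energy balance
`E^{n+1/2} - E^{n-1/2} = b(f^n, (v^{n+1} - v^{n-1}) / 2)`. The CFL condition makes the energy
coercive, `E^{n+1/2} ≥ (1 - ρ²)/2 ‖π((v^{n+1} - v^n)/τ)‖²`, so the right-hand side is at most a
multiple of `τ ‖π f^n‖ (√E^{n+1/2} + √E^{n-1/2})`. Cancelling the sum of square roots, `√E` grows
by at most a multiple of `τ ‖π f^n‖` per step (a discrete Gronwall argument).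
-/

open RealInnerProductSpace

theorem le_add_of_sq_le_sq_add_mul {x y β : ℝ} (hy : 0 ≤ y) (hβ : 0 ≤ β)
    (h : x ^ 2 ≤ y ^ 2 + β * (x + y)) : x ≤ y + β := by
  nlinarith

theorem le_add_sum_of_sq_succ_le {e g : ℕ → ℝ} (he : ∀ k, 0 ≤ e k) (hg : ∀ k, 0 ≤ g k)
    (hstep : ∀ k, e (k + 1) ^ 2 ≤ e k ^ 2 + g (k + 1) * (e (k + 1) + e k)) (n : ℕ) :
    e n ≤ e 0 + ∑ k ∈ Finset.Icc 1 n, g k := by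
  induction n with
  | zero => simp
  | succ n ih =>
    rw [Finset.sum_Icc_succ_top (Nat.le_add_left 1 n)]
    linarith [le_add_of_sq_le_sq_add_mul (he n) (hg (n + 1)) (hstep n)]

theorem le_two_mul_add_of_energy_succ_le {E d g : ℕ → ℝ} {c : ℝ} (hc : 0 < c)
    (hd : ∀ k, 0 ≤ d k) (hg : ∀ k, 0 ≤ g k) (hdE : ∀ k, c * d k ^ 2 ≤ E k)
    (hstep : ∀ k, E (k + 1) ≤ E k + g (k + 1) * (d (k + 1) + d k)) (n : ℕ) :
    E n ≤ 2 * E 0 + 2 / c * (∑ k ∈ Finset.Icc 1 n, g k) ^ 2 := by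
  have hE : ∀ k, 0 ≤ E k := fun k => (by positivity : 0 ≤ c * d k ^ 2).trans (hdE k)
  have hsc : 0 < √c := Real.sqrt_pos.mpr hc
  have hd_le : ∀ k, d k ≤ √(E k) / √c := fun k => by
    rw [le_div_iff₀ hsc, ← Real.sqrt_sq (hd k), ← Real.sqrt_mul' _ hc.le]
    exact Real.sqrt_le_sqrt (by linarith [hdE k])
  have hroot := le_add_sum_of_sq_succ_le (e := fun k => √(E k)) (g := fun k => g k / √c)
    (fun k => Real.sqrt_nonneg _) (fun k => div_nonneg (hg k) hsc.le) (fun k => by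
      simp only [Real.sq_sqrt (hE _)]
      have := mul_le_mul_of_nonneg_left (add_le_add (hd_le (k + 1)) (hd_le k)) (hg (k + 1))
      calc E (k + 1) ≤ E k + g (k + 1) * (d (k + 1) + d k) := hstep k
        _ ≤ E k + g (k + 1) / √c * (√(E (k + 1)) + √(E k)) := by
          rw [div_mul_eq_mul_div, mul_div_assoc, add_div]; linarith) n
  rw [← Finset.sum_div] at hroot
  set G := ∑ k ∈ Finset.Icc 1 n, g k
  calc E n = √(E n) ^ 2 := (Real.sq_sqrt (hE n)).symm
    _ ≤ (√(E 0) + G / √c) ^ 2 := pow_le_pow_left₀ (Real.sqrt_nonneg _) hroot 2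
    _ ≤ 2 * √(E 0) ^ 2 + 2 * (G / √c) ^ 2 := by nlinarith [sq_nonneg (√(E 0) - G / √c)]
    _ = 2 * E 0 + 2 / c * G ^ 2 := by
      rw [Real.sq_sqrt (hE 0), div_pow, Real.sq_sqrt hc.le]; ring

theorem leapfrog_energy_identity {M : Type*} [AddCommGroup M] [Module ℝ M]
    (a q : M →ₗ[ℝ] M →ₗ[ℝ] ℝ) (ha : ∀ u w, a u w = a w u) (hq : ∀ u w, q u w = q w u)
    {τ : ℝ} (hτ : τ ≠ 0) (x y z : M) :
    (1 / 2) * q (τ⁻¹ • (z - y)) (τ⁻¹ • (z - y)) - τ ^ 2 / 8 * a (τ⁻¹ • (z - y)) (τ⁻¹ • (z - y))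
        + (1 / 2) * a ((2 : ℝ)⁻¹ • (z + y)) ((2 : ℝ)⁻¹ • (z + y))
      - ((1 / 2) * q (τ⁻¹ • (y - x)) (τ⁻¹ • (y - x))
        - τ ^ 2 / 8 * a (τ⁻¹ • (y - x)) (τ⁻¹ • (y - x))
        + (1 / 2) * a ((2 : ℝ)⁻¹ • (y + x)) ((2 : ℝ)⁻¹ • (y + x)))
    = q ((τ ^ 2)⁻¹ • (z - 2 • y + x)) ((2 : ℝ)⁻¹ • (z - x)) + a y ((2 : ℝ)⁻¹ • (z - x)) := by
  simp only [two_smul, map_sub, map_add, map_smul, LinearMap.sub_apply, LinearMap.add_apply,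
    LinearMap.smul_apply, smul_eq_mul, ha y x, ha z y, hq y x, hq z x, hq z y]
  field_simp
  ring

section Leapfrog

variable {H : Type*} [NormedAddCommGroup H] [InnerProductSpace ℝ H]
  (W : Submodule ℝ H) [W.HasOrthogonalProjection] (a : H →ₗ[ℝ] H →ₗ[ℝ] ℝ) {τ : ℝ} (v : ℕ → H)

theorem discE_succ_sub (ha : ∀ u w, a u w = a w u) (hτ : τ ≠ 0) (k : ℕ) :
    discE W a τ v (k + 1) - discE W a τ v k
      = ⟪(W.orthogonalProjectionOnto ((τ ^ 2)⁻¹ • (v (k + 1 + 1) - 2 • v (k + 1) + v k)) : H),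
          (W.orthogonalProjectionOnto ((2 : ℝ)⁻¹ • (v (k + 1 + 1) - v k)) : H)⟫
        + a (v (k + 1)) ((2 : ℝ)⁻¹ • (v (k + 1 + 1) - v k)) := by
  let P := W.starProjection.toLinearMap
  have hq := leapfrog_energy_identity a ((innerₗ H).compl₁₂ P P) ha
    (fun u w => real_inner_comm _ _) hτ (v k) (v (k + 1)) (v (k + 1 + 1))
  simp only [LinearMap.compl₁₂_apply, innerₗ_apply_apply, real_inner_self_eq_norm_sq] at hq
  exact hq

theorem discE_ge_of_cfl {ρ : ℝ} (n : ℕ)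
    (hmean : 0 ≤ a ((2 : ℝ)⁻¹ • (v (n + 1) + v n)) ((2 : ℝ)⁻¹ • (v (n + 1) + v n)))
    (hcfl : τ ^ 2 * a (τ⁻¹ • (v (n + 1) - v n)) (τ⁻¹ • (v (n + 1) - v n))
      ≤ 4 * ρ ^ 2 * ‖(W.orthogonalProjectionOnto (τ⁻¹ • (v (n + 1) - v n)) : H)‖ ^ 2) :
    (1 - ρ ^ 2) / 2 * (‖(W.orthogonalProjectionOnto (τ⁻¹ • (v (n + 1) - v n)) : H)‖ ^ 2
      + a ((2 : ℝ)⁻¹ • (v (n + 1) + v n)) ((2 : ℝ)⁻¹ • (v (n + 1) + v n)))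
      ≤ discE W a τ v n := by
  unfold discE
  nlinarith [mul_nonneg (sq_nonneg ρ) hmean]

theorem norm_proj_half_sub_le (hτ : 0 < τ) (k : ℕ) :
    ‖(W.orthogonalProjectionOnto ((2 : ℝ)⁻¹ • (v (k + 1 + 1) - v k)) : H)‖
      ≤ τ / 2 * (‖(W.orthogonalProjectionOnto (τ⁻¹ • (v (k + 1 + 1) - v (k + 1))) : H)‖
        + ‖(W.orthogonalProjectionOnto (τ⁻¹ • (v (k + 1) - v k)) : H)‖) := by
  have hsplit : (2 : ℝ)⁻¹ • (v (k + 1 + 1) - v k)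
      = (τ / 2) • (τ⁻¹ • (v (k + 1 + 1) - v (k + 1)) + τ⁻¹ • (v (k + 1) - v k)) := by
    rw [← smul_add, smul_smul, sub_add_sub_cancel]
    congr 1
    field_simp
  rw [hsplit, map_smul, Submodule.coe_smul, norm_smul, Real.norm_of_nonneg (by positivity),
    map_add, Submodule.coe_add]
  gcongr
  exact norm_add_le _ _

theorem discE_succ_le_of_scheme (V : Submodule ℝ H) (ha : ∀ u w, a u w = a w u) (hτ : 0 < τ)
    (hv : ∀ n, v n ∈ V) {f : H} (k : ℕ)
    (hscheme : ∀ w ∈ V,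
      ⟪(W.orthogonalProjectionOnto ((τ ^ 2)⁻¹ • (v (k + 1 + 1) - 2 • v (k + 1) + v k)) : H),
          (W.orthogonalProjectionOnto w : H)⟫ + a (v (k + 1)) w
        = ⟪(W.orthogonalProjectionOnto f : H), (W.orthogonalProjectionOnto w : H)⟫) :
    discE W a τ v (k + 1) ≤ discE W a τ v k + τ / 2 * ‖(W.orthogonalProjectionOnto f : H)‖
      * (‖(W.orthogonalProjectionOnto (τ⁻¹ • (v (k + 1 + 1) - v (k + 1))) : H)‖
        + ‖(W.orthogonalProjectionOnto (τ⁻¹ • (v (k + 1) - v k)) : H)‖) := by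
  have htest := hscheme _ (V.smul_mem (2 : ℝ)⁻¹ (V.sub_mem (hv (k + 1 + 1)) (hv k)))
  have hid := discE_succ_sub W a v ha hτ.ne' k
  have hcs := real_inner_le_norm (W.orthogonalProjectionOnto f : H)
    (W.orthogonalProjectionOnto ((2 : ℝ)⁻¹ • (v (k + 1 + 1) - v k)) : H)
  have hinc := mul_le_mul_of_nonneg_left (norm_proj_half_sub_le W v hτ k)
    (norm_nonneg (W.orthogonalProjectionOnto f : H))
  linarith

theorem discE_le_of_scheme (V : Submodule ℝ H) (ha : ∀ u w, a u w = a w u) (hτ : 0 < τ)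
    {ρ : ℝ} (hρ : ρ ^ 2 < 1) (hpos : ∀ w ∈ V, 0 ≤ a w w)
    (hcfl : ∀ w ∈ V, τ ^ 2 * a w w ≤ 4 * ρ ^ 2 * ‖(W.orthogonalProjectionOnto w : H)‖ ^ 2)
    (hv : ∀ n, v n ∈ V) {f : ℕ → H}
    (hscheme : ∀ n, 1 ≤ n → ∀ w ∈ V,
      ⟪(W.orthogonalProjectionOnto ((τ ^ 2)⁻¹ • (v (n + 1) - 2 • v n + v (n - 1))) : H),
          (W.orthogonalProjectionOnto w : H)⟫ + a (v n) w
        = ⟪(W.orthogonalProjectionOnto (f n) : H), (W.orthogonalProjectionOnto w : H)⟫) (n : ℕ) :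
    discE W a τ v n ≤ 2 * discE W a τ v 0 + τ ^ 2 / (1 - ρ ^ 2)
      * (∑ k ∈ Finset.Icc 1 n, ‖(W.orthogonalProjectionOnto (f k) : H)‖) ^ 2 := by
  have hc : 0 < (1 - ρ ^ 2) / 2 := by linarith
  have hmean k := hpos _ (V.smul_mem (2 : ℝ)⁻¹ (V.add_mem (hv (k + 1)) (hv k)))
  have hcoer k := discE_ge_of_cfl W a v k (hmean k)
    (hcfl _ (V.smul_mem _ (V.sub_mem (hv _) (hv _))))
  have hstep k := discE_succ_le_of_scheme W a v V ha hτ hv (f := f (k + 1)) k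
    (by simpa using hscheme (k + 1) k.succ_pos)
  have h := le_two_mul_add_of_energy_succ_le (E := discE W a τ v)
    (d := fun k => ‖(W.orthogonalProjectionOnto (τ⁻¹ • (v (k + 1) - v k)) : H)‖)
    (g := fun k => τ / 2 * ‖(W.orthogonalProjectionOnto (f k) : H)‖) hc
    (fun k => norm_nonneg _) (fun k => by positivity)
    (fun k => by nlinarith [hcoer k, hmean k])
    hstep n
  convert h using 2
  rw [← Finset.mul_sum]
  field_simp

end Leapfrog

/-- Stability of the coarse-grid scheme driven by `b(f^n, ·)`: there is a constant `C > 0`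
depending only on `ρ` such that
`‖π((v^{n+1}−v^n)/τ)‖² + a((v^{n+1}+v^n)/2,(v^{n+1}+v^n)/2)
  ≤ C (E^{1/2}(v) + τ² (Σ_{k=1}^n ‖π f^k‖)²)`. -/
theorem stability_estimate (ρ : ℝ) (hρ0 : 0 ≤ ρ) (hρ1 : ρ < 1) :
    ∃ C : ℝ, 0 < C ∧
      ∀ (H : Type) [NormedAddCommGroup H] [InnerProductSpace ℝ H]
        (W V : Submodule ℝ H) [W.HasOrthogonalProjection]
        (a : H →ₗ[ℝ] H →ₗ[ℝ] ℝ), (∀ u w : H, a u w = a w u) →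
      ∀ τ : ℝ, 0 < τ →
      (∀ w ∈ V, 0 ≤ a w w) →
      (∀ w ∈ V, τ ^ 2 * a w w ≤ 4 * ρ ^ 2 * ‖(W.orthogonalProjectionOnto w : H)‖ ^ 2) →
      ∀ (v : ℕ → H) (f : ℕ → H), (∀ n, v n ∈ V) →
      (∀ n, 1 ≤ n → ∀ w ∈ V,
        ⟪(W.orthogonalProjectionOnto ((τ ^ 2)⁻¹ • (v (n + 1) - 2 • v n + v (n - 1))) : H),
          (W.orthogonalProjectionOnto w : H)⟫ + a (v n) w
        = ⟪(W.orthogonalProjectionOnto (f n) : H), (W.orthogonalProjectionOnto w : H)⟫) →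
      ∀ n, 1 ≤ n →
        ‖(W.orthogonalProjectionOnto (τ⁻¹ • (v (n + 1) - v n)) : H)‖ ^ 2
          + a ((2 : ℝ)⁻¹ • (v (n + 1) + v n)) ((2 : ℝ)⁻¹ • (v (n + 1) + v n))
        ≤ C * (discE W a τ v 0
            + τ ^ 2 * (∑ k ∈ Finset.Icc 1 n, ‖(W.orthogonalProjectionOnto (f k) : H)‖) ^ 2) := by
  have hρ : 0 < 1 - ρ ^ 2 := by nlinarith
  refine ⟨4 / (1 - ρ ^ 2) ^ 2, by positivity, ?_⟩
  intro H _ _ W V _ a ha τ hτ hpos hcfl v f hv hscheme n _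
  have hmean k := hpos _ (V.smul_mem (2 : ℝ)⁻¹ (V.add_mem (hv (k + 1)) (hv k)))
  have hcoer k := discE_ge_of_cfl W a v k (hmean k)
    (hcfl _ (V.smul_mem _ (V.sub_mem (hv _) (hv _))))
  have hE0 : 0 ≤ discE W a τ v 0 :=
    (mul_nonneg (by positivity) (add_nonneg (sq_nonneg _) (hmean 0))).trans (hcoer 0)
  have henergy := discE_le_of_scheme W a v V ha hτ (by linarith) hpos hcfl hv hscheme n
  set c := 1 - ρ ^ 2
  set S := ∑ k ∈ Finset.Icc 1 n, ‖(W.orthogonalProjectionOnto (f k) : H)‖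
  rw [div_mul_eq_mul_div, le_div_iff₀ (by positivity)]
  calc _ = 2 * c * (c / 2 * (‖(W.orthogonalProjectionOnto (τ⁻¹ • (v (n + 1) - v n)) : H)‖ ^ 2
          + a ((2 : ℝ)⁻¹ • (v (n + 1) + v n)) ((2 : ℝ)⁻¹ • (v (n + 1) + v n)))) := by ring
    _ ≤ 2 * c * (2 * discE W a τ v 0 + τ ^ 2 / c * S ^ 2) := by
        gcongr
        exact (hcoer n).trans henergy
    _ = 4 * c * discE W a τ v 0 + 2 * τ ^ 2 * S ^ 2 := by field_simp; ring
    _ ≤ 4 * (discE W a τ v 0 + τ ^ 2 * S ^ 2) := by nlinarith [sq_nonneg ρ, sq_nonneg (τ * S)]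
end
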